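/- arXiv:0903.4308 — 2 statements merged into one kernel-verified Lean document; each statement's English description precedes it below -/
import Mathlib

section
/- Let X = (J₁,...,J_k) be jointly distributed random variables together with a random variable Y (all finite-valued). Then I(J₁...J_k ; Y) ≥ ∑_{ℓ=1}^k I(J_ℓ ; Y) - ∑_{ℓ=1}^{k-1} I(J_ℓ ; J_{ℓ+1}...J_k), where I denotes Shannon mutual information. -/
open Finset

/-- Probability that a finite-valued random variable `X` (on a finite sample space with
pmf `μ`) takes the value `x`. -/
noncomputable def probOf {Ω α : Type*} [Fintype Ω] [DecidableEq α]
    (μ : Ω → ℝ) (X : Ω → α) (x : α) : ℝ :=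
  ∑ ω, if X ω = x then μ ω else 0

/-- Shannon entropy (base 2) of a finite-valued random variable. -/
noncomputable def ent {Ω α : Type*} [Fintype Ω] [Fintype α] [DecidableEq α]
    (μ : Ω → ℝ) (X : Ω → α) : ℝ :=
  -∑ x, probOf μ X x * Real.logb 2 (probOf μ X x)

/-- Shannon mutual information `I(X;Y) = H(X) + H(Y) - H(X,Y)` (base 2). -/
noncomputable def minfo {Ω α β : Type*} [Fintype Ω] [Fintype α] [Fintype β]
    [DecidableEq α] [DecidableEq β] (μ : Ω → ℝ) (X : Ω → α) (Y : Ω → β) : ℝ :=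
  ent μ X + ent μ Y - ent μ (fun ω => (X ω, Y ω))

/-!
Peel the coordinates off one at a time. Strong subadditivity
`H(A,B,C) + H(C) ≤ H(A,C) + H(B,C)`, i.e. `I(A;B | C) ≥ 0`, is Gibbs' inequality between the
law of `(A,B,C)` and `p(a,c) p(b,c) / p(c)`; with `C := Y` it gives the chain-rule estimate
`I(A;Y) + I(B;Y) ≤ I(AB;Y) + I(A;B)`. Applied with `A := J_ℓ`, `B := J_{ℓ+1}…J_k`, downward
induction on `ℓ` yields the claim; the extra term `I(J_k; ∅)` this produces for `ℓ = k` vanishes.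
-/

namespace MInfo

open Real

variable {Ω α β γ : Type*} [Fintype Ω] (μ : Ω → ℝ)

section Distribution

variable [DecidableEq α]

theorem probOf_nonneg (hμ0 : ∀ ω, 0 ≤ μ ω) (X : Ω → α) (x : α) : 0 ≤ probOf μ X x :=
  sum_nonneg fun ω _ => by split_ifs <;> simp [hμ0 ω]

theorem sum_probOf_mul [Fintype α] (X : Ω → α) (g : α → ℝ) :
    ∑ x, probOf μ X x * g x = ∑ ω, μ ω * g (X ω) := by
  simp only [probOf, sum_mul, ite_mul, zero_mul]
  rw [sum_comm]
  simp

theorem sum_probOf [Fintype α] (hμ1 : ∑ ω, μ ω = 1) (X : Ω → α) : ∑ x, probOf μ X x = 1 := by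
  simpa [hμ1] using sum_probOf_mul μ X 1

variable [DecidableEq γ]

theorem probOf_le_probOf_comp (hμ0 : ∀ ω, 0 ≤ μ ω) (X : Ω → α) (f : α → γ) (x : α) :
    probOf μ X x ≤ probOf μ (fun ω => f (X ω)) (f x) :=
  sum_le_sum fun ω _ => by
    by_cases h : X ω = x
    · simp [h]
    · by_cases h' : f (X ω) = f x <;> simp [h, h', hμ0 ω]

theorem probOf_comp_of_injective (X : Ω → α) {f : α → γ} (hf : Function.Injective f) (x : α) :
    probOf μ (fun ω => f (X ω)) (f x) = probOf μ X x := by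
  simp only [probOf, hf.eq_iff]

theorem sum_probOf_prod_fst [Fintype α] (X : Ω → α) (Z : Ω → γ) (z : γ) :
    ∑ x, probOf μ (fun ω => (X ω, Z ω)) (x, z) = probOf μ Z z := by
  simp only [probOf, Prod.ext_iff, ite_and]
  rw [sum_comm]
  simp

end Distribution

theorem mul_log_sub_mul_log_le {p q : ℝ} (hp : 0 ≤ p) (hq : 0 ≤ q) (hpq : 0 < p → 0 < q) :
    p * log q - p * log p ≤ q - p := by
  rcases hp.eq_or_lt with rfl | hp
  · simpa using hq
  · have hq := hpq hp
    have := log_le_sub_one_of_pos (div_pos hq hp)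
    rw [log_div hq.ne' hp.ne'] at this
    calc p * log q - p * log p = p * (log q - log p) := by ring
      _ ≤ p * (q / p - 1) := mul_le_mul_of_nonneg_left this hp.le
      _ = q - p := by field_simp

theorem sum_mul_log_le_sum_mul_log {ι : Type*} (s : Finset ι) (p q : ι → ℝ)
    (hp : ∀ i ∈ s, 0 ≤ p i) (hq : ∀ i ∈ s, 0 ≤ q i) (hpq : ∀ i ∈ s, 0 < p i → 0 < q i)
    (hsum : ∑ i ∈ s, q i ≤ ∑ i ∈ s, p i) :
    ∑ i ∈ s, p i * log (q i) ≤ ∑ i ∈ s, p i * log (p i) := by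
  have := sum_le_sum fun i hi => mul_log_sub_mul_log_le (hp i hi) (hq i hi) (hpq i hi)
  rw [sum_sub_distrib, sum_sub_distrib] at this
  linarith

section Entropy

variable [Fintype α] [DecidableEq α]

theorem ent_eq_sum_negMulLog (X : Ω → α) :
    ent μ X = (∑ x, negMulLog (probOf μ X x)) / log 2 := by
  simp only [ent, logb, negMulLog, sum_div, ← sum_neg_distrib]
  congr 1
  ext x
  ring

variable [Fintype γ] [DecidableEq γ]

theorem sum_negMulLog_probOf_comp (X : Ω → α) (f : α → γ) :
    ∑ y, negMulLog (probOf μ (fun ω => f (X ω)) y)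
      = -∑ x, probOf μ X x * log (probOf μ (fun ω => f (X ω)) (f x)) := by
  simp only [negMulLog, neg_mul, sum_neg_distrib, sum_probOf_mul μ _ (fun y => log _)]

theorem ent_comp_of_injective (X : Ω → α) {f : α → γ} (hf : Function.Injective f) :
    ent μ (fun ω => f (X ω)) = ent μ X := by
  rw [ent_eq_sum_negMulLog, ent_eq_sum_negMulLog, sum_negMulLog_probOf_comp]
  simp only [probOf_comp_of_injective μ X hf, negMulLog, neg_mul, sum_neg_distrib]

theorem ent_const (hμ1 : ∑ ω, μ ω = 1) (a : α) : ent μ (fun _ => a) = 0 := by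
  have hconst x : probOf μ (fun _ => a) x = if a = x then 1 else 0 := by
    split_ifs <;> simp [probOf, *]
  simp [ent, hconst, apply_ite]

end Entropy

section StrongSubadditivity

variable [Fintype α] [Fintype β] [Fintype γ] [DecidableEq α] [DecidableEq β] [DecidableEq γ]

theorem sum_probOf_mul_probOf_div_probOf (hμ1 : ∑ ω, μ ω = 1)
    (A : Ω → α) (B : Ω → β) (C : Ω → γ) :
    ∑ x : (α × β) × γ, probOf μ (fun ω => (A ω, C ω)) (x.1.1, x.2)
      * probOf μ (fun ω => (B ω, C ω)) (x.1.2, x.2) / probOf μ C x.2 = 1 := by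
  calc _ = ∑ c : γ, (∑ a : α, probOf μ (fun ω => (A ω, C ω)) (a, c))
          * (∑ b, probOf μ (fun ω => (B ω, C ω)) (b, c)) / probOf μ C c := by
        simp only [Fintype.sum_prod_type, sum_mul_sum, sum_div]
        exact (sum_congr rfl fun a _ => sum_comm).trans sum_comm
    _ = ∑ c, probOf μ C c := by
        simp only [sum_probOf_prod_fst, mul_self_div_self]
    _ = 1 := sum_probOf μ hμ1 C

theorem ent_triple_add_ent_le (hμ0 : ∀ ω, 0 ≤ μ ω) (hμ1 : ∑ ω, μ ω = 1)
    (A : Ω → α) (B : Ω → β) (C : Ω → γ) :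
    ent μ (fun ω => ((A ω, B ω), C ω)) + ent μ C
      ≤ ent μ (fun ω => (A ω, C ω)) + ent μ (fun ω => (B ω, C ω)) := by
  set Z := fun ω => ((A ω, B ω), C ω)
  set p := probOf μ Z
  set pAC := probOf μ (fun ω => (A ω, C ω))
  set pBC := probOf μ (fun ω => (B ω, C ω))
  set pC := probOf μ C
  have hAC : ∑ y, negMulLog (pAC y) = -∑ x, p x * log (pAC (x.1.1, x.2)) :=
    sum_negMulLog_probOf_comp μ Z fun x => (x.1.1, x.2)
  have hBC : ∑ y, negMulLog (pBC y) = -∑ x, p x * log (pBC (x.1.2, x.2)) :=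
    sum_negMulLog_probOf_comp μ Z fun x => (x.1.2, x.2)
  have hC : ∑ y, negMulLog (pC y) = -∑ x, p x * log (pC x.2) :=
    sum_negMulLog_probOf_comp μ Z Prod.snd
  have hZ : ∑ x, negMulLog (p x) = -∑ x, p x * log (p x) := by
    simp only [negMulLog, neg_mul, sum_neg_distrib]
  -- `q` is the law `(A, B, C)` would have if `A` and `B` were conditionally independent given `C`.
  set q := fun x : (α × β) × γ => pAC (x.1.1, x.2) * pBC (x.1.2, x.2) / pC x.2
  have hp x : 0 ≤ p x := probOf_nonneg μ hμ0 Z x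
  have hq x : 0 ≤ q x := by
    have := probOf_nonneg μ hμ0 (fun ω => (A ω, C ω)) (x.1.1, x.2)
    have := probOf_nonneg μ hμ0 (fun ω => (B ω, C ω)) (x.1.2, x.2)
    have := probOf_nonneg μ hμ0 C x.2
    positivity
  have hpos x (hx : 0 < p x) : 0 < pAC (x.1.1, x.2) ∧ 0 < pBC (x.1.2, x.2) ∧ 0 < pC x.2 :=
    ⟨hx.trans_le (probOf_le_probOf_comp μ hμ0 Z (fun x => (x.1.1, x.2)) x),
      hx.trans_le (probOf_le_probOf_comp μ hμ0 Z (fun x => (x.1.2, x.2)) x),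
      hx.trans_le (probOf_le_probOf_comp μ hμ0 Z Prod.snd x)⟩
  have hlog x : p x * log (q x)
      = p x * log (pAC (x.1.1, x.2)) + p x * log (pBC (x.1.2, x.2)) - p x * log (pC x.2) := by
    rcases (hp x).eq_or_lt with hx | hx
    · simp [← hx]
    · obtain ⟨h1, h2, h3⟩ := hpos x hx
      rw [log_div (by positivity) h3.ne', log_mul h1.ne' h2.ne']
      ring
  have gibbs := sum_mul_log_le_sum_mul_log univ p q (fun x _ => hp x) (fun x _ => hq x)
    (fun x _ hx => by obtain ⟨h1, h2, h3⟩ := hpos x hx; positivity)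
    (by rw [sum_probOf_mul_probOf_div_probOf μ hμ1, sum_probOf μ hμ1])
  simp only [hlog, sum_sub_distrib, sum_add_distrib] at gibbs
  rw [ent_eq_sum_negMulLog, ent_eq_sum_negMulLog, ent_eq_sum_negMulLog, ent_eq_sum_negMulLog,
    ← add_div, ← add_div, div_le_div_iff_of_pos_right (log_pos one_lt_two), hAC, hBC, hC, hZ]
  linarith

end StrongSubadditivity

section MutualInformation

variable [Fintype α] [Fintype β] [Fintype γ] [DecidableEq α] [DecidableEq β] [DecidableEq γ]

theorem ent_prod_const (X : Ω → α) (c : γ) : ent μ (fun ω => (X ω, c)) = ent μ X :=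
  ent_comp_of_injective μ X (f := fun x => (x, c)) fun _ _ h => congrArg Prod.fst h

theorem minfo_comp_left_of_injective (X : Ω → α) (Y : Ω → β) {f : α → γ}
    (hf : Function.Injective f) : minfo μ (fun ω => f (X ω)) Y = minfo μ X Y := by
  rw [minfo, minfo, ent_comp_of_injective μ X hf]
  congr 1
  exact ent_comp_of_injective μ (fun ω => (X ω, Y ω)) (hf.prodMap Function.injective_id)

theorem minfo_const_right (hμ1 : ∑ ω, μ ω = 1) (X : Ω → α) (c : γ) :
    minfo μ X (fun _ => c) = 0 := by
  simp only [minfo, ent_prod_const, ent_const μ hμ1]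
  ring

theorem minfo_nonneg (hμ0 : ∀ ω, 0 ≤ μ ω) (hμ1 : ∑ ω, μ ω = 1) (X : Ω → α) (Y : Ω → β) :
    0 ≤ minfo μ X Y := by
  have := ent_triple_add_ent_le μ hμ0 hμ1 X Y fun _ => ()
  simp only [ent_prod_const, ent_const μ hμ1] at this
  unfold minfo
  linarith

theorem minfo_add_minfo_le_minfo_prod_add_minfo (hμ0 : ∀ ω, 0 ≤ μ ω) (hμ1 : ∑ ω, μ ω = 1)
    (A : Ω → α) (B : Ω → β) (Y : Ω → γ) :
    minfo μ A Y + minfo μ B Y ≤ minfo μ (fun ω => (A ω, B ω)) Y + minfo μ A B := by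
  have := ent_triple_add_ent_le μ hμ0 hμ1 A B Y
  unfold minfo
  linarith

end MutualInformation

section Suffix

variable {k : ℕ} [Fintype α] [Fintype β] [DecidableEq α] [DecidableEq β] (J : Fin k → Ω → α)

def suffixTuple (m : ℕ) : Ω → ({i : Fin k // m ≤ (i : ℕ)} → α) := fun ω i => J i ω

theorem minfo_tuple_eq_minfo_suffixTuple_zero (Y : Ω → β) :
    minfo μ (fun ω i => J i ω) Y = minfo μ (suffixTuple J 0) Y := by
  let restrict (g : Fin k → α) (i : {i : Fin k // 0 ≤ (i : ℕ)}) : α := g i.1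
  have hinj : Function.Injective restrict := fun g g' h =>
    funext fun i => congrFun h ⟨i, Nat.zero_le _⟩
  exact (minfo_comp_left_of_injective μ (fun ω i => J i ω) Y hinj).symm

theorem minfo_suffixTuple_eq_minfo_prod (Y : Ω → β) {m : ℕ} (hm : m < k) :
    minfo μ (suffixTuple J m) Y
      = minfo μ (fun ω => (J ⟨m, hm⟩ ω, suffixTuple J (m + 1) ω)) Y := by
  let split (g : {i : Fin k // m ≤ (i : ℕ)} → α) : α × ({i : Fin k // m + 1 ≤ (i : ℕ)} → α) :=
    (g ⟨⟨m, hm⟩, le_rfl⟩, fun i => g ⟨i.1, Nat.le_of_succ_le i.2⟩)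
  have hinj : Function.Injective split := fun g g' h => funext fun ⟨i, hi⟩ => by
    rcases hi.eq_or_lt with hi | hi
    · obtain rfl : ⟨m, hm⟩ = i := Fin.ext hi
      exact congrArg Prod.fst h
    · exact congrFun (congrArg Prod.snd h) ⟨i, hi⟩
  exact (minfo_comp_left_of_injective μ (suffixTuple J m) Y hinj).symm

theorem minfo_suffixTuple_eq_zero (hμ1 : ∑ ω, μ ω = 1) (ℓ : Fin k) (hℓ : k ≤ ℓ + 1) :
    minfo μ (J ℓ) (suffixTuple J (ℓ + 1)) = 0 := by
  have hempty : suffixTuple J (ℓ + 1) = fun _ i => absurd i.1.2 (by have := i.2; omega) := by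
    funext ω i
    exact absurd i.1.2 (by have := i.2; omega)
  rw [hempty, minfo_const_right μ hμ1]

theorem filter_le_eq_insert {m : ℕ} (hm : m < k) :
    univ.filter (fun ℓ : Fin k => m ≤ ℓ)
      = insert ⟨m, hm⟩ (univ.filter (fun ℓ : Fin k => m + 1 ≤ ℓ)) := by
  ext ℓ
  simp only [mem_filter, mem_univ, true_and, mem_insert, Fin.ext_iff]
  omega

theorem sum_minfo_sub_minfo_suffixTuple_le (hμ0 : ∀ ω, 0 ≤ μ ω) (hμ1 : ∑ ω, μ ω = 1)
    (Y : Ω → β) {m : ℕ} (hm : m ≤ k) :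
    ∑ ℓ ∈ univ.filter (fun ℓ : Fin k => m ≤ ℓ),
        (minfo μ (J ℓ) Y - minfo μ (J ℓ) (suffixTuple J (ℓ + 1)))
      ≤ minfo μ (suffixTuple J m) Y := by
  induction hm using Nat.decreasingInduction with
  | self =>
    rw [filter_false_of_mem fun ℓ _ => not_le.2 ℓ.2, sum_empty]
    exact minfo_nonneg μ hμ0 hμ1 _ Y
  | of_succ m hm ih =>
    have chain := minfo_add_minfo_le_minfo_prod_add_minfo μ hμ0 hμ1
      (J ⟨m, hm⟩) (suffixTuple J (m + 1)) Y
    rw [filter_le_eq_insert hm, sum_insert (by simp), minfo_suffixTuple_eq_minfo_prod μ J Y hm]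
    dsimp only at ih ⊢
    linarith

end Suffix

end MInfo

open MInfo

/-- Superadditivity of mutual information up to pairwise correlations of `J_ℓ` with the
tails: `I(J₁…J_k ; Y) ≥ ∑_ℓ I(J_ℓ;Y) - ∑_{ℓ<k} I(J_ℓ; J_{ℓ+1}…J_k)`. -/
theorem minfo_superadditivity
    {Ω α β : Type*} [Fintype Ω] [Fintype α] [Fintype β] [DecidableEq α] [DecidableEq β]
    (μ : Ω → ℝ) (hμ0 : ∀ ω, 0 ≤ μ ω) (hμ1 : ∑ ω, μ ω = 1)
    (k : ℕ) (J : Fin k → Ω → α) (Y : Ω → β) :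
    minfo μ (fun ω => fun i : Fin k => J i ω) Y
      ≥ (∑ ℓ : Fin k, minfo μ (J ℓ) Y)
        - ∑ ℓ ∈ Finset.univ.filter (fun ℓ : Fin k => (ℓ : ℕ) + 1 < k),
            minfo μ (J ℓ) (fun ω => fun i : {i : Fin k // ℓ < i} => J i ω) := by
  have htails : ∑ ℓ ∈ univ.filter (fun ℓ : Fin k => (ℓ : ℕ) + 1 < k),
        minfo μ (J ℓ) (suffixTuple J (ℓ + 1))
      = ∑ ℓ, minfo μ (J ℓ) (suffixTuple J (ℓ + 1)) :=
    sum_filter_of_ne fun ℓ _ h => by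
      by_contra hℓ
      exact h (minfo_suffixTuple_eq_zero μ J hμ1 ℓ (not_lt.1 hℓ))
  rw [ge_iff_le, minfo_tuple_eq_minfo_suffixTuple_zero]
  calc _ = ∑ ℓ ∈ univ.filter (fun ℓ : Fin k => 0 ≤ (ℓ : ℕ)),
        (minfo μ (J ℓ) Y - minfo μ (J ℓ) (suffixTuple J (ℓ + 1))) := by
        rw [filter_true_of_mem fun ℓ _ => Nat.zero_le _, sum_sub_distrib, ← htails]
        -- `{i // ℓ < i}` is definitionally `{i // ℓ + 1 ≤ i}`.
        rfl
    _ ≤ _ := sum_minfo_sub_minfo_suffixTuple_le μ J hμ0 hμ1 Y (Nat.zero_le k)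
end

section
/- Let J₁,...,J_k, Y be finite-valued random variables such that the marginal distributions of the pairs (J_ℓ, Y) are all equal to that of (J₁, Y), and such that I(J_ℓ; J_{ℓ+1}...J_k) ≤ ε_ℓ for each ℓ < k. Then I(J₁; Y) ≤ (1/k) I(J₁...J_k; Y) + (1/k) ∑_{ℓ=1}^{k-1} ε_ℓ. -/
open Finset

/-!
Strong subadditivity `H(X,Y,Z) + H(Y) ≤ H(X,Y) + H(Y,Z)` follows from `log x ≤ x - 1` applied
to the ratio `p(x,y) p(y,z) / (p(x,y,z) p(y))`, whose `p`-average is at most one. Rearranged, it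
says `I(X;Y) + I(Z;Y) ≤ I((X,Z);Y) + I(X;Z)`. Splitting off the variables `J_ℓ` one at a time,
smallest index first, gives `∑_ℓ I(J_ℓ;Y) - ∑_ℓ I(J_ℓ;J_{>ℓ}) ≤ I(J;Y)`, where every
`I(J_ℓ;Y)` equals `I(J₁;Y)` and the last tail is empty.
-/

section Distribution

variable {Ω α β : Type*} [Fintype Ω] [DecidableEq α] [DecidableEq β] {μ : Ω → ℝ}

theorem sum_mul_comp_eq_sum_probOf [Fintype α] (μ : Ω → ℝ) (X : Ω → α) (g : α → ℝ) :
    ∑ ω, μ ω * g (X ω) = ∑ x, probOf μ X x * g x := by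
  simp only [probOf, Finset.sum_mul, ite_mul, zero_mul]
  rw [Finset.sum_comm]
  simp

theorem sum_probOf [Fintype α] (μ : Ω → ℝ) (X : Ω → α) : ∑ x, probOf μ X x = ∑ ω, μ ω := by
  simpa using (sum_mul_comp_eq_sum_probOf μ X fun _ => 1).symm

theorem probOf_nonneg (hμ : ∀ ω, 0 ≤ μ ω) (X : Ω → α) (x : α) : 0 ≤ probOf μ X x :=
  Finset.sum_nonneg fun ω _ => by split_ifs <;> simp [hμ ω]

theorem le_probOf_apply (hμ : ∀ ω, 0 ≤ μ ω) (X : Ω → α) (ω : Ω) : μ ω ≤ probOf μ X (X ω) := by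
  unfold probOf
  simpa using Finset.single_le_sum (f := fun ω' => if X ω' = X ω then μ ω' else 0)
    (fun ω' _ => by split_ifs <;> simp [hμ ω']) (Finset.mem_univ ω)

theorem probOf_fst [Fintype β] (μ : Ω → ℝ) (X : Ω → α) (Y : Ω → β) (a : α) :
    probOf μ X a = ∑ b, probOf μ (fun ω => (X ω, Y ω)) (a, b) := by
  simp only [probOf, Prod.mk.injEq]
  rw [Finset.sum_comm]
  refine Finset.sum_congr rfl fun ω _ => ?_
  split_ifs with h <;> simp [h]

theorem probOf_snd [Fintype α] (μ : Ω → ℝ) (X : Ω → α) (Y : Ω → β) (b : β) :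
    probOf μ Y b = ∑ a, probOf μ (fun ω => (X ω, Y ω)) (a, b) := by
  simp only [probOf, Prod.mk.injEq]
  rw [Finset.sum_comm]
  refine Finset.sum_congr rfl fun ω _ => ?_
  split_ifs with h <;> simp [h]

theorem probOf_comp_of_injective (μ : Ω → ℝ) (X : Ω → α) {f : α → β}
    (hf : Function.Injective f) (x : α) : probOf μ (fun ω => f (X ω)) (f x) = probOf μ X x := by
  simp only [probOf, hf.eq_iff]

end Distribution

section Entropy

variable {Ω α β γ : Type*} [Fintype Ω] [Fintype α] [Fintype β] [Fintype γ]
  [DecidableEq α] [DecidableEq β] [DecidableEq γ] {μ : Ω → ℝ}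

theorem ent_eq_neg_sum (μ : Ω → ℝ) (X : Ω → α) :
    ent μ X = -∑ ω, μ ω * Real.logb 2 (probOf μ X (X ω)) := by
  rw [ent, sum_mul_comp_eq_sum_probOf μ X fun x => Real.logb 2 (probOf μ X x)]

theorem ent_congr {X X' : Ω → α} (h : ∀ x, probOf μ X x = probOf μ X' x) :
    ent μ X = ent μ X' := by
  simp only [ent, h]

theorem ent_comp_of_injective (μ : Ω → ℝ) (X : Ω → α) {f : α → β} (hf : Function.Injective f) :
    ent μ (fun ω => f (X ω)) = ent μ X := by
  simp only [ent_eq_neg_sum, probOf_comp_of_injective μ X hf]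

theorem ent_eq_zero_of_subsingleton [Subsingleton α] (hμ1 : ∑ ω, μ ω = 1) (X : Ω → α) :
    ent μ X = 0 := by
  have h1 : ∀ x, probOf μ X x = 1 := fun x => by
    simp only [probOf, Subsingleton.elim _ x, if_true, hμ1]
  simp [ent, h1]

theorem minfo_comm (μ : Ω → ℝ) (X : Ω → α) (Y : Ω → β) : minfo μ X Y = minfo μ Y X := by
  have h := ent_comp_of_injective μ (fun ω => (X ω, Y ω)) Prod.swap_injective
  simp only [minfo, Prod.swap_prod_mk] at h ⊢
  linarith

theorem minfo_comp_left_of_injective (μ : Ω → ℝ) (X : Ω → α) (Y : Ω → β) {f : α → γ}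
    (hf : Function.Injective f) : minfo μ (fun ω => f (X ω)) Y = minfo μ X Y := by
  simp only [minfo, ent_comp_of_injective μ X hf,
    ← ent_comp_of_injective μ (fun ω => (X ω, Y ω)) (hf.prodMap Function.injective_id)]
  rfl

theorem minfo_comp_right_of_injective (μ : Ω → ℝ) (X : Ω → α) (Y : Ω → β) {f : β → γ}
    (hf : Function.Injective f) : minfo μ X (fun ω => f (Y ω)) = minfo μ X Y := by
  rw [minfo_comm, minfo_comp_left_of_injective μ Y X hf, minfo_comm]

theorem minfo_eq_zero_of_subsingleton [Subsingleton β] (hμ1 : ∑ ω, μ ω = 1)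
    (X : Ω → α) (Y : Ω → β) : minfo μ X Y = 0 := by
  have h := ent_comp_of_injective μ (fun ω => (X ω, Y ω))
    (f := Prod.fst) fun p q hpq => Prod.ext hpq (Subsingleton.elim _ _)
  simp only [minfo, ent_eq_zero_of_subsingleton hμ1 Y] at h ⊢
  linarith

theorem minfo_congr_of_probOf_pair {X X' : Ω → α} {Y : Ω → β}
    (h : ∀ a b, probOf μ (fun ω => (X ω, Y ω)) (a, b) = probOf μ (fun ω => (X' ω, Y ω)) (a, b)) :
    minfo μ X Y = minfo μ X' Y := by
  have hX : ent μ X = ent μ X' := ent_congr fun a => by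
    rw [probOf_fst μ X Y, probOf_fst μ X' Y]
    simp only [h]
  have hXY : ent μ (fun ω => (X ω, Y ω)) = ent μ (fun ω => (X' ω, Y ω)) :=
    ent_congr fun ⟨a, b⟩ => h a b
  rw [minfo, minfo, hX, hXY]

end Entropy

theorem sum_mul_logb_nonpos {Ω : Type*} [Fintype Ω] {μ r : Ω → ℝ} (hμ : ∀ ω, 0 ≤ μ ω)
    (hr : ∀ ω, 0 < μ ω → 0 < r ω) (hsum : ∑ ω, μ ω * r ω ≤ ∑ ω, μ ω) :
    ∑ ω, μ ω * Real.logb 2 (r ω) ≤ 0 := by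
  have hlog2 : 0 < Real.log 2 := Real.log_pos one_lt_two
  have hterm : ∀ ω, μ ω * Real.logb 2 (r ω) ≤ (μ ω * r ω - μ ω) / Real.log 2 := fun ω => by
    rcases (hμ ω).eq_or_lt with h0 | hpos
    · simp [← h0]
    · rw [Real.logb, le_div_iff₀ hlog2, mul_div_assoc', div_mul_cancel₀ _ hlog2.ne']
      nlinarith [Real.log_le_sub_one_of_pos (hr ω hpos)]
  calc ∑ ω, μ ω * Real.logb 2 (r ω)
      ≤ ∑ ω, (μ ω * r ω - μ ω) / Real.log 2 := Finset.sum_le_sum fun ω _ => hterm ω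
    _ = ((∑ ω, μ ω * r ω) - ∑ ω, μ ω) / Real.log 2 := by
      rw [← Finset.sum_div, Finset.sum_sub_distrib]
    _ ≤ 0 := div_nonpos_of_nonpos_of_nonneg (by linarith) hlog2.le

theorem sum_mul_pair_ratio_le {α β γ : Type*} [Fintype α] [Fintype β] [Fintype γ]
    {p : α × β × γ → ℝ} {q : α × β → ℝ} {q' : β × γ → ℝ} {m : β → ℝ} (hp : ∀ t, 0 ≤ p t)
    (hq : ∀ s, 0 ≤ q s) (hq' : ∀ s, 0 ≤ q' s) (hm : ∀ b, 0 ≤ m b)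
    (hqm : ∀ b, ∑ a, q (a, b) = m b) (hq'm : ∀ b, ∑ c, q' (b, c) = m b) :
    ∑ t, p t * (q (t.1, t.2.1) * q' t.2 / (p t * m t.2.1)) ≤ ∑ b, m b := by
  have hterm : ∀ t, p t * (q (t.1, t.2.1) * q' t.2 / (p t * m t.2.1))
      ≤ q (t.1, t.2.1) * q' t.2 / m t.2.1 := fun t => by
    rcases (hp t).eq_or_lt with h0 | hpos
    · rw [← h0, zero_mul]
      exact div_nonneg (mul_nonneg (hq _) (hq' _)) (hm _)
    · rw [← mul_div_assoc, mul_div_mul_left _ _ hpos.ne']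
  calc _ ≤ ∑ t : α × β × γ, q (t.1, t.2.1) * q' t.2 / m t.2.1 :=
        Finset.sum_le_sum fun t _ => hterm t
    _ = ∑ b, (∑ a, q (a, b)) * (∑ c, q' (b, c)) / m b := by
      simp only [Fintype.sum_prod_type, Finset.sum_mul_sum, Finset.sum_div]
      exact Finset.sum_comm
    _ = ∑ b, m b := by simp only [hqm, hq'm, mul_self_div_self]

section Subadditivity

variable {Ω α β γ : Type*} [Fintype Ω] [Fintype α] [Fintype β] [Fintype γ]
  [DecidableEq α] [DecidableEq β] [DecidableEq γ] {μ : Ω → ℝ}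

theorem ent_triple_add_ent_le (hμ : ∀ ω, 0 ≤ μ ω) (X : Ω → α) (Y : Ω → β) (Z : Ω → γ) :
    ent μ (fun ω => (X ω, Y ω, Z ω)) + ent μ Y
      ≤ ent μ (fun ω => (X ω, Y ω)) + ent μ (fun ω => (Y ω, Z ω)) := by
  set pXYZ := probOf μ (fun ω => (X ω, Y ω, Z ω))
  set pXY := probOf μ (fun ω => (X ω, Y ω))
  set pYZ := probOf μ (fun ω => (Y ω, Z ω))
  set pY := probOf μ Y
  set r : Ω → ℝ := fun ω =>
    pXY (X ω, Y ω) * pYZ (Y ω, Z ω) / (pXYZ (X ω, Y ω, Z ω) * pY (Y ω))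
  have hmarg : ∀ ω, 0 < μ ω → 0 < pXY (X ω, Y ω) ∧ 0 < pYZ (Y ω, Z ω) ∧
      0 < pXYZ (X ω, Y ω, Z ω) ∧ 0 < pY (Y ω) := fun ω hpos =>
    ⟨hpos.trans_le (le_probOf_apply hμ _ ω), hpos.trans_le (le_probOf_apply hμ _ ω),
      hpos.trans_le (le_probOf_apply hμ _ ω), hpos.trans_le (le_probOf_apply hμ _ ω)⟩
  have hlogb : ∀ ω, μ ω * Real.logb 2 (r ω)
      = μ ω * Real.logb 2 (pXY (X ω, Y ω)) + μ ω * Real.logb 2 (pYZ (Y ω, Z ω))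
        - μ ω * Real.logb 2 (pXYZ (X ω, Y ω, Z ω)) - μ ω * Real.logb 2 (pY (Y ω)) := fun ω => by
    rcases (hμ ω).eq_or_lt with h0 | hpos
    · simp [← h0]
    obtain ⟨h1, h2, h3, h4⟩ := hmarg ω hpos
    simp only [r, Real.logb_div (mul_pos h1 h2).ne' (mul_pos h3 h4).ne',
      Real.logb_mul h1.ne' h2.ne', Real.logb_mul h3.ne' h4.ne']
    ring
  have hr_pos : ∀ ω, 0 < μ ω → 0 < r ω := fun ω hpos => by
    obtain ⟨h1, h2, h3, h4⟩ := hmarg ω hpos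
    positivity
  have hsum : ∑ ω, μ ω * r ω ≤ ∑ ω, μ ω :=
    (sum_mul_comp_eq_sum_probOf μ (fun ω => (X ω, Y ω, Z ω)) fun t =>
      pXY (t.1, t.2.1) * pYZ t.2 / (pXYZ t * pY t.2.1)).trans_le
      ((sum_mul_pair_ratio_le (probOf_nonneg hμ _) (probOf_nonneg hμ _) (probOf_nonneg hμ _)
        (probOf_nonneg hμ _) (fun b => (probOf_snd μ X Y b).symm)
        (fun b => (probOf_fst μ Y Z b).symm)).trans_eq (sum_probOf μ Y))
  have hgibbs := sum_mul_logb_nonpos hμ hr_pos hsum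
  simp only [hlogb, Finset.sum_sub_distrib, Finset.sum_add_distrib] at hgibbs
  simp only [ent_eq_neg_sum]
  linarith

theorem minfo_add_minfo_le (hμ : ∀ ω, 0 ≤ μ ω) (X : Ω → α) (Y : Ω → β) (Z : Ω → γ) :
    minfo μ X Y + minfo μ Z Y ≤ minfo μ (fun ω => (X ω, Z ω)) Y + minfo μ X Z := by
  have hssa := ent_triple_add_ent_le hμ X Y Z
  have hXZY : ent μ (fun ω => ((X ω, Z ω), Y ω)) = ent μ (fun ω => (X ω, Y ω, Z ω)) :=
    ent_comp_of_injective μ (fun ω => (X ω, Y ω, Z ω)) (f := fun t => ((t.1, t.2.2), t.2.1))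
      fun s t h => by simp_all [Prod.ext_iff]
  have hZY : ent μ (fun ω => (Z ω, Y ω)) = ent μ (fun ω => (Y ω, Z ω)) :=
    ent_comp_of_injective μ (fun ω => (Y ω, Z ω)) Prod.swap_injective
  simp only [minfo]
  linarith

variable {ι : Type*} [LinearOrder ι]

theorem sum_minfo_sub_sum_minfo_tail_le (hμ : ∀ ω, 0 ≤ μ ω) (hμ1 : ∑ ω, μ ω = 1)
    (J : ι → Ω → α) (Y : Ω → β) (s : Finset ι) :
    ∑ i ∈ s, minfo μ (J i) Y
        - ∑ i ∈ s, minfo μ (J i) (fun ω (j : s.filter (i < ·)) => J j ω)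
      ≤ minfo μ (fun ω (j : s) => J j ω) Y := by
  induction s using Finset.induction_on_min with
  | empty => simp [minfo_comm μ _ Y, minfo_eq_zero_of_subsingleton hμ1]
  | insert a s ha ih =>
    have has : a ∉ s := fun h => (ha a h).false
    have htail_a : (insert a s).filter (a < ·) = s := by
      rw [Finset.filter_insert, if_neg (lt_irrefl a), Finset.filter_true_of_mem ha]
    have htail : ∀ i ∈ s, (insert a s).filter (i < ·) = s.filter (i < ·) := fun i hi => by
      rw [Finset.filter_insert, if_neg (ha i hi).not_gt]
    have hsplit : Function.Injective fun (v : ↥(insert a s) → α) =>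
        (v ⟨a, Finset.mem_insert_self a s⟩, fun j : s => v ⟨j, Finset.mem_insert_of_mem j.2⟩) := by
      intro v w hvw
      simp only [Prod.mk.injEq, funext_iff] at hvw
      funext ⟨j, hj⟩
      rcases Finset.mem_insert.1 hj with rfl | hj
      · exact hvw.1
      · exact hvw.2 ⟨j, hj⟩
    have hpair := minfo_add_minfo_le hμ (J a) Y fun ω (j : s) => J j ω
    have hjoint := minfo_comp_left_of_injective μ (fun ω (j : ↥(insert a s)) => J j ω) Y hsplit
    dsimp only at hjoint
    have hsum_tail : ∑ i ∈ s, minfo μ (J i) (fun ω (j : (insert a s).filter (i < ·)) => J j ω)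
        = ∑ i ∈ s, minfo μ (J i) (fun ω (j : s.filter (i < ·)) => J j ω) :=
      Finset.sum_congr rfl fun i hi => by rw [htail i hi]
    rw [Finset.sum_insert has, Finset.sum_insert has, htail_a, hsum_tail]
    linarith

end Subadditivity

theorem minfo_restrict_filter_univ_eq {Ω ι α γ : Type*} [Fintype Ω] [Fintype ι] [DecidableEq ι]
    [Fintype α] [Fintype γ] [DecidableEq α] [DecidableEq γ] (μ : Ω → ℝ) (X : Ω → γ)
    (J : ι → Ω → α) (p : ι → Prop) [DecidablePred p] :
    minfo μ X (fun ω (j : Finset.univ.filter p) => J j ω)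
      = minfo μ X (fun ω (j : {j // p j}) => J j ω) := by
  have hsurj : Function.Surjective fun j : Finset.univ.filter p =>
      (⟨j, (Finset.mem_filter.1 j.2).2⟩ : {j // p j}) :=
    fun j => ⟨⟨j, Finset.mem_filter.2 ⟨Finset.mem_univ _, j.2⟩⟩, rfl⟩
  have h := minfo_comp_right_of_injective μ X (fun ω (j : {j // p j}) => J j ω)
    hsurj.injective_comp_right
  simp only [Function.comp_def] at h
  exact h

theorem minfo_restrict_univ_eq {Ω ι α β : Type*} [Fintype Ω] [Fintype ι] [DecidableEq ι]
    [Fintype α] [Fintype β] [DecidableEq α] [DecidableEq β] (μ : Ω → ℝ) (J : ι → Ω → α)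
    (Y : Ω → β) :
    minfo μ (fun ω (j : (Finset.univ : Finset ι)) => J j ω) Y = minfo μ (fun ω i => J i ω) Y := by
  have hsurj : Function.Surjective fun j : (Finset.univ : Finset ι) => (j : ι) :=
    fun i => ⟨⟨i, Finset.mem_univ i⟩, rfl⟩
  have h := minfo_comp_left_of_injective μ (fun ω i => J i ω) Y hsurj.injective_comp_right
  simp only [Function.comp_def] at h
  exact h

theorem sum_minfo_tail_le {Ω α : Type*} [Fintype Ω] [Fintype α] [DecidableEq α] {μ : Ω → ℝ}
    (hμ1 : ∑ ω, μ ω = 1) {k : ℕ} (J : Fin k → Ω → α) (ε : Fin k → ℝ)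
    (hcorr : ∀ ℓ : Fin k, (ℓ : ℕ) + 1 < k →
      minfo μ (J ℓ) (fun ω => fun i : {i : Fin k // ℓ < i} => J i ω) ≤ ε ℓ) :
    ∑ ℓ, minfo μ (J ℓ) (fun ω (j : Finset.univ.filter (ℓ < ·)) => J j ω)
      ≤ ∑ ℓ ∈ Finset.univ.filter (fun ℓ : Fin k => (ℓ : ℕ) + 1 < k), ε ℓ := by
  rw [← Finset.sum_filter_add_sum_filter_not Finset.univ (fun ℓ : Fin k => (ℓ : ℕ) + 1 < k)]
  have hlast : ∀ ℓ ∈ Finset.univ.filter (fun ℓ : Fin k => ¬(ℓ : ℕ) + 1 < k),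
      minfo μ (J ℓ) (fun ω (j : Finset.univ.filter (ℓ < ·)) => J j ω) = 0 := fun ℓ hℓ => by
    have : IsEmpty (Finset.univ.filter (ℓ < ·)) := ⟨fun j => by
      have := (Finset.mem_filter.1 j.2).2
      have := (Finset.mem_filter.1 hℓ).2
      omega⟩
    exact minfo_eq_zero_of_subsingleton hμ1 _ _
  rw [Finset.sum_eq_zero hlast, add_zero]
  refine Finset.sum_le_sum fun ℓ hℓ => ?_
  rw [minfo_restrict_filter_univ_eq]
  exact hcorr ℓ (Finset.mem_filter.1 hℓ).2

/-- If the pairs `(J_ℓ, Y)` are identically distributed and the correlations of `J_ℓ` with the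
tail `J_{ℓ+1}…J_k` are bounded by `ε_ℓ`, then
`I(J₁;Y) ≤ (1/k) I(J₁…J_k;Y) + (1/k) ∑_{ℓ<k} ε_ℓ`. -/
theorem minfo_single_le_average
    {Ω α β : Type*} [Fintype Ω] [Fintype α] [Fintype β] [DecidableEq α] [DecidableEq β]
    (μ : Ω → ℝ) (hμ0 : ∀ ω, 0 ≤ μ ω) (hμ1 : ∑ ω, μ ω = 1)
    (k : ℕ) (hk : 0 < k) (J : Fin k → Ω → α) (Y : Ω → β) (ε : Fin k → ℝ)
    (hsame : ∀ ℓ : Fin k, ∀ (a : α) (y : β),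
      probOf μ (fun ω => (J ℓ ω, Y ω)) (a, y) = probOf μ (fun ω => (J ⟨0, hk⟩ ω, Y ω)) (a, y))
    (hcorr : ∀ ℓ : Fin k, (ℓ : ℕ) + 1 < k →
      minfo μ (J ℓ) (fun ω => fun i : {i : Fin k // ℓ < i} => J i ω) ≤ ε ℓ) :
    minfo μ (J ⟨0, hk⟩) Y
      ≤ (1 / k) * minfo μ (fun ω => fun i : Fin k => J i ω) Y
        + (1 / k) * ∑ ℓ ∈ Finset.univ.filter (fun ℓ : Fin k => (ℓ : ℕ) + 1 < k), ε ℓ := by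
  have hsuper := sum_minfo_sub_sum_minfo_tail_le hμ0 hμ1 J Y Finset.univ
  have hsingle : ∀ ℓ, minfo μ (J ℓ) Y = minfo μ (J ⟨0, hk⟩) Y := fun ℓ =>
    minfo_congr_of_probOf_pair (hsame ℓ)
  have htails := sum_minfo_tail_le hμ1 J ε hcorr
  simp only [hsingle, Finset.sum_const, Finset.card_univ, Fintype.card_fin, nsmul_eq_mul,
    minfo_restrict_univ_eq] at hsuper
  rw [← mul_add, one_div, inv_mul_eq_div, le_div_iff₀ (Nat.cast_pos.2 hk)]
  linarith
end
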